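/- Let B ∈ ℝ^{n×n} be symmetric, with spectral decomposition B = V·diag(σ_1,…,σ_n)·Vᵀ where V is orthogonal. Define B₊ = V·diag(max(σ_1,0),…,max(σ_n,0))·Vᵀ. Then B₊ is positive semidefinite, and for every positive semidefinite matrix X ∈ ℝ^{n×n} one has ‖B − X‖²_F ≥ Σ_{i : σ_i < 0} σ_i², with equality if and only if X = B₊. In particular B₊ is the (unique) nearest positive semidefinite matrix to B in the Frobenius norm and the minimal squared distance is Σ_{i : σ_i < 0} σ_i². -/

import Mathlib

/-!
Conjugation by the orthogonal `V` preserves the Frobenius norm and positive semidefiniteness,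
which reduces everything to `B = diag σ` and a PSD `Y`, whose diagonal is nonnegative. Entrywise,
`max s 0` is the projection of `s` onto `[0, ∞)`, so `(s - s₊)² + (s₊ - y)² ≤ (s - y)²` for
`y ≥ 0`, while off-diagonal entries contribute equally to both sides. This gives the Pythagorean
inequality `‖B - B₊‖² + ‖B₊ - X‖² ≤ ‖B - X‖²` with `‖B - B₊‖² = Σ_{σᵢ < 0} σᵢ²`, from which both
the bound and its equality case `X = B₊` follow.
-/

open Matrix

/-- Squared Frobenius norm of a real matrix. -/
noncomputable def frobSq {n : ℕ} (M : Matrix (Fin n) (Fin n) ℝ) : ℝ :=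
  ∑ a, ∑ b, (M a b) ^ 2

section PosPart

variable {α : Type*} [CommRing α] [LinearOrder α]

lemma sq_sub_max_zero (s : α) : (s - max s 0) ^ 2 = if s < 0 then s ^ 2 else 0 := by
  split_ifs with hs
  · rw [max_eq_right hs.le, sub_zero]
  · rw [max_eq_left (not_lt.mp hs), sub_self, sq, zero_mul]

lemma sq_sub_max_zero_add_sq_le [IsStrictOrderedRing α] {y : α} (s : α) (hy : 0 ≤ y) :
    (s - max s 0) ^ 2 + (max s 0 - y) ^ 2 ≤ (s - y) ^ 2 := by
  rcases le_total s 0 with hs | hs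
  · rw [max_eq_right hs]; nlinarith
  · rw [max_eq_left hs]; nlinarith

end PosPart

section Frobenius

variable {n : ℕ}

lemma frobSq_nonneg (M : Matrix (Fin n) (Fin n) ℝ) : 0 ≤ frobSq M := by
  unfold frobSq; positivity

lemma frobSq_eq_zero_iff {M : Matrix (Fin n) (Fin n) ℝ} : frobSq M = 0 ↔ M = 0 := by
  refine ⟨fun h => ?_, fun h => by simp [frobSq, h]⟩
  have hrow := (Finset.sum_eq_zero_iff_of_nonneg fun a _ =>
    Finset.sum_nonneg fun b _ => sq_nonneg (M a b)).mp h
  ext a b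
  exact pow_eq_zero_iff two_ne_zero |>.mp <| (Finset.sum_eq_zero_iff_of_nonneg fun b _ =>
    sq_nonneg (M a b)).mp (hrow a (Finset.mem_univ a)) b (Finset.mem_univ b)

lemma frobSq_eq_trace (M : Matrix (Fin n) (Fin n) ℝ) : frobSq M = (Mᵀ * M).trace := by
  simp only [frobSq, Matrix.trace, Matrix.diag, Matrix.mul_apply, Matrix.transpose_apply, sq]
  exact Finset.sum_comm

lemma frobSq_transpose_mul_mul {V : Matrix (Fin n) (Fin n) ℝ} (hV : Vᵀ * V = 1)
    (M : Matrix (Fin n) (Fin n) ℝ) : frobSq (Vᵀ * M * V) = frobSq M := by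
  have hV' : V * Vᵀ = 1 := mul_eq_one_comm.mp hV
  have key : (Vᵀ * M * V)ᵀ * (Vᵀ * M * V) = Vᵀ * (Mᵀ * M) * V := by
    simp only [Matrix.transpose_mul, Matrix.transpose_transpose, Matrix.mul_assoc]
    rw [← Matrix.mul_assoc V, hV', Matrix.one_mul]
  rw [frobSq_eq_trace, frobSq_eq_trace, key, Matrix.trace_mul_cycle, hV', Matrix.one_mul]

lemma frobSq_diagonal (d : Fin n → ℝ) : frobSq (diagonal d) = ∑ i, d i ^ 2 := by
  simp [frobSq, diagonal_apply, apply_ite (· ^ 2)]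

lemma frobSq_diagonal_sub_posPart_add_le (σ : Fin n → ℝ) {Y : Matrix (Fin n) (Fin n) ℝ}
    (hY : ∀ i, 0 ≤ Y i i) :
    frobSq (diagonal σ - diagonal fun i => max (σ i) 0)
      + frobSq ((diagonal fun i => max (σ i) 0) - Y) ≤ frobSq (diagonal σ - Y) := by
  simp only [frobSq, ← Finset.sum_add_distrib]
  refine Finset.sum_le_sum fun a _ => Finset.sum_le_sum fun b _ => ?_
  rcases eq_or_ne a b with rfl | hab
  · simpa using sq_sub_max_zero_add_sq_le (σ a) (hY a)
  · simp [diagonal_apply_ne _ hab]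

end Frobenius

lemma transpose_mul_conj_mul {ι R : Type*} [Fintype ι] [DecidableEq ι] [Semiring R]
    {V : Matrix ι ι R} (hV : Vᵀ * V = 1) (A : Matrix ι ι R) : Vᵀ * (V * A * Vᵀ) * V = A := by
  rw [Matrix.mul_assoc, Matrix.mul_assoc, hV, Matrix.mul_one, ← Matrix.mul_assoc, hV,
    Matrix.one_mul]

lemma frobSq_sub_posPart_add_le {n : ℕ} {B V X : Matrix (Fin n) (Fin n) ℝ} {σ : Fin n → ℝ}
    (hV : Vᵀ * V = 1) (hVB : B = V * diagonal σ * Vᵀ) (hX : X.PosSemidef) :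
    frobSq (B - V * diagonal (fun i => max (σ i) 0) * Vᵀ)
      + frobSq (V * diagonal (fun i => max (σ i) 0) * Vᵀ - X) ≤ frobSq (B - X) := by
  have hY : (Vᵀ * X * V).PosSemidef := by
    simpa using hX.conjTranspose_mul_mul_same V
  rw [← frobSq_transpose_mul_mul hV (B - _), ← frobSq_transpose_mul_mul hV (_ - X),
    ← frobSq_transpose_mul_mul hV (B - X)]
  simp only [Matrix.mul_sub, Matrix.sub_mul, hVB, transpose_mul_conj_mul hV]
  exact frobSq_diagonal_sub_posPart_add_le σ fun i => hY.diag_nonneg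

open scoped Classical in
theorem nearest_psd_of_symmetric_general {n : ℕ} (B V : Matrix (Fin n) (Fin n) ℝ)
    (σ : Fin n → ℝ)
    (hV : Vᵀ * V = 1) (hVB : B = V * Matrix.diagonal σ * Vᵀ) :
    (V * Matrix.diagonal (fun i => max (σ i) 0) * Vᵀ).PosSemidef ∧
    (∀ X : Matrix (Fin n) (Fin n) ℝ, X.PosSemidef →
      (∑ i, if σ i < 0 then (σ i) ^ 2 else 0) ≤ frobSq (B - X)) ∧
    (∀ X : Matrix (Fin n) (Fin n) ℝ, X.PosSemidef →
      (frobSq (B - X) = (∑ i, if σ i < 0 then (σ i) ^ 2 else 0) ↔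
        X = V * Matrix.diagonal (fun i => max (σ i) 0) * Vᵀ)) := by
  set Bp := V * diagonal (fun i => max (σ i) 0) * Vᵀ
  have hdist : frobSq (B - Bp) = ∑ i, if σ i < 0 then σ i ^ 2 else 0 := by
    rw [← frobSq_transpose_mul_mul hV, Matrix.mul_sub, Matrix.sub_mul, hVB,
      transpose_mul_conj_mul hV, transpose_mul_conj_mul hV, diagonal_sub, frobSq_diagonal]
    simp only [sq_sub_max_zero]
  refine ⟨?_, fun X hX => ?_, fun X hX => ⟨fun h => ?_, ?_⟩⟩
  · simpa using (PosSemidef.diagonal fun i => le_max_right (σ i) 0).mul_mul_conjTranspose_same V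
  · linarith [frobSq_sub_posPart_add_le hV hVB hX, frobSq_nonneg (Bp - X)]
  · have h0 : frobSq (Bp - X) = 0 := le_antisymm (by
      linarith [frobSq_sub_posPart_add_le hV hVB hX]) (frobSq_nonneg _)
    exact (sub_eq_zero.mp (frobSq_eq_zero_iff.mp h0)).symm
  · rintro rfl
    exact hdist

open scoped Classical in
/-- let `B` be symmetric with spectral decomposition
`B = V·diag(σ)·Vᵀ` (`V` orthogonal), and let `B₊ = V·diag(max(σ,0))·Vᵀ`.
Then `B₊` is positive semidefinite, and for every positive semidefinite `X` one has
`‖B − X‖²_F ≥ Σ_{i : σ_i < 0} σ_i²`, with equality if and only if `X = B₊`.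
In particular `B₊` is the unique nearest PSD matrix to `B` in the Frobenius norm and
the minimal squared distance is `Σ_{i : σ_i < 0} σ_i²`. -/
theorem nearest_psd_of_symmetric {n : ℕ} (B V : Matrix (Fin n) (Fin n) ℝ)
    (σ : Fin n → ℝ) (hBsym : Bᵀ = B)
    (hV : Vᵀ * V = 1) (hVB : B = V * Matrix.diagonal σ * Vᵀ) :
    (V * Matrix.diagonal (fun i => max (σ i) 0) * Vᵀ).PosSemidef ∧
    (∀ X : Matrix (Fin n) (Fin n) ℝ, X.PosSemidef →
      (∑ i, if σ i < 0 then (σ i) ^ 2 else 0) ≤ frobSq (B - X)) ∧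
    (∀ X : Matrix (Fin n) (Fin n) ℝ, X.PosSemidef →
      (frobSq (B - X) = (∑ i, if σ i < 0 then (σ i) ^ 2 else 0) ↔
        X = V * Matrix.diagonal (fun i => max (σ i) 0) * Vᵀ)) :=
  nearest_psd_of_symmetric_general B V σ hV hVB
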